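/- Define x ≼' y on ℕ^ℕ iff rank(x) < rank(y), or rank(x) = rank(y) and x ≤_lex y in the lexicographic order on ℕ^ℕ. Then ≼' is a linear order (total, antisymmetric, transitive) on ℕ^ℕ of uncountable cofinality. -/

import Mathlib

open Cardinal Ordinal

/-- The set `Q_x = {q_k : x(k) = 0}` of rationals coded by `x ∈ ℕ^ℕ`,
relative to a fixed enumeration `q` of `ℚ`. -/
def Qset (q : ℕ → ℚ) (x : ℕ → ℕ) : Set ℚ := {r | ∃ k, x k = 0 ∧ q k = r}

/-- The maximal well-ordered initial segment of `Q_x`: the set of `r ∈ Q_x` whose set of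
`≤`-predecessors within `Q_x` is well-founded under `<`. -/
def maxWO (q : ℕ → ℚ) (x : ℕ → ℕ) : Set ℚ :=
  {r ∈ Qset q x | ({r' ∈ Qset q x | r' ≤ r}).WellFoundedOn (· < ·)}

/-- The lexicographic order on Baire space `ℕ^ℕ`. -/
def lexLE (x y : ℕ → ℕ) : Prop :=
  x = y ∨ ∃ n, (∀ m, m < n → x m = y m) ∧ x n < y n

/-! Comparing `x` by the key `(rank x, x)` in the lexicographic product
`Ordinal ×ₗ Lex (ℕ → ℕ)` makes `≼'` the pullback of a linear order along an injection.
The ranks are exactly the countable ordinals: each `maxWO q x` is a countable well-order, and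
conversely a countable ordinal embeds into `ℚ`, where its image is coded by some `x` and is its
own maximal well-ordered initial segment. As `ω₁` has uncountable cofinality, the ranks of a
countable `Y` are bounded below `ω₁`, so some rank exceeds them all, and its witness is not
dominated by any element of `Y`. -/

universe u

lemma lexLE_iff_toLex_le (x y : ℕ → ℕ) : lexLE x y ↔ toLex x ≤ toLex y := by
  rw [le_iff_eq_or_lt, toLex_inj]
  rfl

theorem Ordinal.lt_omega_one_iff_countable_toType {o : Ordinal.{u}} :
    o < ω₁ ↔ Countable o.ToType := by
  rw [← mk_le_aleph0_iff, mk_toType, card_le_iff, succ_aleph0, ord_aleph]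

theorem Ordinal.exists_forall_lt_of_countable {α : Type*} (f : α → Ordinal.{u})
    (hf : ∀ a, f a < ω₁) (hunbdd : ∀ o < ω₁, ∃ a, o < f a) {Y : Set α} (hY : Y.Countable) :
    ∃ a, ∀ y ∈ Y, f y < f a := by
  have : Countable Y := hY.to_subtype
  obtain ⟨a, ha⟩ := hunbdd (⨆ y : Y, f y) (iSup_lt_omega_one fun y => hf y)
  exact ⟨a, fun y hy => (Ordinal.le_iSup (fun y : Y => f y) ⟨y, hy⟩).trans_lt ha⟩

open Classical in
noncomputable def code (q : ℕ → ℚ) (S : Set ℚ) : ℕ → ℕ := fun k => if q k ∈ S then 0 else 1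

lemma Qset_code {q : ℕ → ℚ} (hq : Function.Surjective q) (S : Set ℚ) :
    Qset q (code q S) = S := by
  ext r
  obtain ⟨k, rfl⟩ := hq r
  constructor
  · rintro ⟨j, hj, hjk⟩
    by_contra h
    simp [code, hjk, h] at hj
  · intro hr
    exact ⟨k, by simp [code, hr], rfl⟩

lemma maxWO_eq_Qset_of_wellFoundedOn {q : ℕ → ℚ} {x : ℕ → ℕ}
    (h : (Qset q x).WellFoundedOn (· < ·)) : maxWO q x = Qset q x :=
  Set.sep_eq_self_iff_mem_true.2 fun _ _ => h.subset fun _ hr => hr.1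

lemma exists_orderIso_maxWO {q : ℕ → ℚ} (hq : Function.Surjective q) (α : Type*)
    [LinearOrder α] [WellFoundedLT α] [Countable α] : ∃ x, Nonempty (α ≃o maxWO q x) := by
  obtain ⟨f⟩ : Nonempty (α ↪o ℚ) := Order.embedding_from_countable_to_dense α ℚ
  have hwf : (Set.range f).WellFoundedOn (· < ·) := by
    rw [Set.wellFoundedOn_range]
    exact (InvImage.wf _ wellFounded_lt).mono fun a b h => f.lt_iff_lt.1 h
  refine ⟨code q (Set.range f), ⟨?_⟩⟩
  rw [maxWO_eq_Qset_of_wellFoundedOn (by rwa [Qset_code hq]), Qset_code hq]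
  exact StrictMono.orderIso _ f.strictMono

section rank

variable {q : ℕ → ℚ} {rank : (ℕ → ℕ) → Ordinal.{u}}

lemma rank_lt_omega_one (hrank : ∀ x, Nonempty ((rank x).ToType ≃o ↥(maxWO q x)))
    (x : ℕ → ℕ) : rank x < ω₁ := by
  obtain ⟨e⟩ := hrank x
  exact lt_omega_one_iff_countable_toType.2 (e.toEquiv.countable_iff.2 inferInstance)

lemma exists_rank_eq (hrank : ∀ x, Nonempty ((rank x).ToType ≃o ↥(maxWO q x)))
    (hq : Function.Surjective q) {o : Ordinal.{u}} (ho : o < ω₁) : ∃ x, rank x = o := by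
  have := lt_omega_one_iff_countable_toType.1 ho
  obtain ⟨x, ⟨e⟩⟩ := exists_orderIso_maxWO hq o.ToType
  obtain ⟨e'⟩ := hrank x
  refine ⟨x, ?_⟩
  rw [← type_toType (rank x), ← type_toType o]
  exact (e'.trans e.symm).ordinalType_congr

end rank

/-- The relation `x ≼' y` iff `rank x < rank y`, or `rank x = rank y` and `x ≤lex y`,
is a linear order on `ℕ^ℕ` of uncountable cofinality. -/
theorem rank_lex_linear_order_uncountably_cofinal (q : ℕ → ℚ) (hq : Function.Bijective q)
    (rank : (ℕ → ℕ) → Ordinal)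
    (hrank : ∀ x, Nonempty ((rank x).ToType ≃o ↥(maxWO q x)))
    (prec' : (ℕ → ℕ) → (ℕ → ℕ) → Prop)
    (hdef : ∀ x y, prec' x y ↔ (rank x < rank y ∨ (rank x = rank y ∧ lexLE x y))) :
    (∀ x y, prec' x y ∨ prec' y x) ∧
    (∀ x y, prec' x y → prec' y x → x = y) ∧
    (∀ x y z, prec' x y → prec' y z → prec' x z) ∧
    ¬ ∃ Y : Set (ℕ → ℕ), Y.Countable ∧ ∀ x : ℕ → ℕ, ∃ y ∈ Y, prec' x y := by
  let key (x : ℕ → ℕ) : Ordinal ×ₗ Lex (ℕ → ℕ) := toLex (rank x, toLex x)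
  have hkey (x y : ℕ → ℕ) : prec' x y ↔ key x ≤ key y := by
    rw [hdef, Prod.Lex.toLex_le_toLex, lexLE_iff_toLex_le]
  have key_injective : key.Injective := fun x y h =>
    toLex_inj.1 (Prod.ext_iff.1 (toLex_inj.1 h)).2
  refine ⟨fun x y => ?_, fun x y hxy hyx => ?_, fun x y z => ?_, ?_⟩
  · simpa only [hkey] using le_total (key x) (key y)
  · exact key_injective (((hkey x y).1 hxy).antisymm ((hkey y x).1 hyx))
  · simpa only [hkey] using le_trans
  · rintro ⟨Y, hY, hcofinal⟩
    have hunbdd (o : Ordinal) (ho : o < ω₁) : ∃ x, o < rank x := by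
      obtain ⟨x, hx⟩ := exists_rank_eq hrank hq.2 ((isSuccLimit_omega 1).succ_lt ho)
      exact ⟨x, hx ▸ Order.lt_succ o⟩
    obtain ⟨x, hx⟩ := exists_forall_lt_of_countable rank (rank_lt_omega_one hrank) hunbdd hY
    obtain ⟨y, hyY, hxy⟩ := hcofinal x
    exact (hx y hyY).not_ge (Prod.Lex.monotone_fst _ _ ((hkey x y).1 hxy))
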